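/- (Theorem 1: Learning forces via fractional denoising.) Let n be a positive integer, τ > 0 and c > 0. Let p_eq be a probability density on ℝⁿ (the distribution of equilibrium conformations), let k(x_m | x_eq) be a conditional probability density (the chemical-aware noise), and let φ_τ(u) = (2πτ²)^{−n/2} exp(−‖u‖²/(2τ²)) (the coordinate Gaussian noise). Define the joint density π(x_eq, x_m, x_f) = p_eq(x_eq) · k(x_m | x_eq) · φ_τ(x_f − x_m) and the marginal q(x_f) = ∫∫ π(x_eq, x_m, x_f) dx_eq dx_m. Assume q is everywhere positive and of Boltzmann form q(x_f) = exp(−E(x_f)/c)/Z for a differentiable E : ℝⁿ → ℝ and normalizing constant Z ∈ (0, ∞), that ∇q(x_f) = ∫∫ ∇_{x_f} π(x_eq, x_m, x_f) dx_eq dx_m for every x_f, and that ∫∫∫ ‖(x_f − x_m)/τ²‖² dπ and ∫ ‖∇ log q‖² q are finite. Then for every measurable f : ℝⁿ → ℝⁿ with ∫ ‖f(x_f)‖² q(x_f) dx_f < ∞, the fractional denoising objective equals the force-matching objective up to an additive constant independent of f: ∫ ‖f(x_f) − (x_f − x_m)‖² dπ(x_eq, x_m, x_f) = (τ⁴/c²)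 ∫ ‖(−c/τ²) f(x_f) − (−∇E(x_f))‖² q(x_f) dx_f + C, where C = τ⁴ ( ∫ ‖(x_f − x_m)/τ²‖² dπ − ∫ ‖∇_{x_f} log q(x_f)‖² q(x_f) dx_f ) does not depend on f. -/

import Mathlib

open MeasureTheory InnerProductSpace
open scoped RealInnerProductSpace

/-!
Expanding the square, the denoising loss is
`∫ ‖f‖² q - 2 ∫ ⟪f x_f, x_f - x_m⟫ dπ + ∫ ‖x_f - x_m‖² dπ`, the first term by Tonelli since `q` is
the `x_f`-marginal of `π`. In the cross term integrate out `x_eq` and `x_m` first: since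
`∇ φ_τ(x_f - x_m) = -(x_f - x_m) φ_τ(x_f - x_m) / τ²`, the interchange hypothesis identifies
`∫∫ (x_f - x_m) π dx_eq dx_m` with `-τ² ∇q x_f`, which the Boltzmann form turns into
`(τ² / c) q x_f ∇E x_f`. Expanding the force-matching loss the same way, its `‖f‖²` and cross terms,
scaled by `τ⁴ / c²`, are those of the denoising loss, and the remaining terms make up the constant
because `∇ log q = -∇E / c`. The Fubini steps are justified by `‖u‖ exp (-‖u‖² / (2τ²)) ≤ τ`.
-/

theorem mul_exp_neg_sq_div_le {τ : ℝ} (hτ : 0 < τ) (t : ℝ) :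
    t * Real.exp (-t ^ 2 / (2 * τ ^ 2)) ≤ τ := by
  rw [neg_div, Real.exp_neg, ← div_eq_mul_inv, div_le_iff₀ (Real.exp_pos _)]
  calc t ≤ τ * (t ^ 2 / (2 * τ ^ 2) + 1) := by
        rw [mul_add, mul_one, ← sub_nonneg]
        have : τ * (t ^ 2 / (2 * τ ^ 2)) + τ - t = ((t - τ) ^ 2 + τ ^ 2) / (2 * τ) := by
          field_simp; ring
        rw [this]; positivity
    _ ≤ τ * Real.exp (t ^ 2 / (2 * τ ^ 2)) := by gcongr; exact Real.add_one_le_exp _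

theorem mul_mul_exp_neg_sq_le {w C τ : ℝ} (hw : 0 ≤ w) (hC : 0 ≤ C) (t : ℝ) :
    w * C * Real.exp (-t ^ 2 / (2 * τ ^ 2)) ≤ C * w := by
  have hexp : Real.exp (-t ^ 2 / (2 * τ ^ 2)) ≤ 1 :=
    Real.exp_le_one_iff.mpr (by rw [neg_div]; exact neg_nonpos.mpr (by positivity))
  nlinarith [mul_le_mul_of_nonneg_left hexp (mul_nonneg hC hw)]

theorem norm_smul_mul_exp_neg_norm_sq_le {F : Type*} [NormedAddCommGroup F] [NormedSpace ℝ F]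
    {w C τ : ℝ} (hτ : 0 < τ) (hw : 0 ≤ w) (hC : 0 ≤ C) (u : F) :
    ‖(w * C * Real.exp (-‖u‖ ^ 2 / (2 * τ ^ 2))) • u‖ ≤ C * τ * w := by
  rw [norm_smul, Real.norm_of_nonneg (by positivity)]
  nlinarith [mul_le_mul_of_nonneg_left (mul_exp_neg_sq_div_le hτ ‖u‖) (mul_nonneg hC hw)]

section Gradient

variable {F : Type*} [NormedAddCommGroup F] [InnerProductSpace ℝ F] [CompleteSpace F]

theorem hasGradientAt_mul_exp_neg_norm_sub_sq (a τ : ℝ) (m x : F) :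
    HasGradientAt (fun y => a * Real.exp (-‖y - m‖ ^ 2 / (2 * τ ^ 2)))
      ((-(τ ^ 2)⁻¹ * (a * Real.exp (-‖x - m‖ ^ 2 / (2 * τ ^ 2)))) • (x - m)) x := by
  have hg : HasDerivAt (fun t : ℝ => a * Real.exp (-t / (2 * τ ^ 2)))
      (a * (Real.exp (-‖x - m‖ ^ 2 / (2 * τ ^ 2)) * (-1 / (2 * τ ^ 2)))) (‖x - m‖ ^ 2) :=
    (((hasDerivAt_id _).neg.div_const _).exp).const_mul a
  rw [hasGradientAt_iff_hasFDerivAt]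
  refine (hg.comp_hasFDerivAt x ((hasFDerivAt_id x).sub_const m).norm_sq).congr_fderiv ?_
  ext y
  simp only [id_eq, map_sub, ContinuousLinearMap.comp_id, smul_apply, sub_apply, coe_innerSL_apply,
    nsmul_eq_mul, Nat.cast_ofNat, smul_eq_mul, neg_mul, neg_smul, map_neg, map_smul, neg_apply,
    toDual_apply_apply]
  ring

theorem hasGradientAt_exp_neg_div_div {E : F → ℝ} {x : F} (hE : DifferentiableAt ℝ E x)
    (c Z : ℝ) : HasGradientAt (fun y => Real.exp (-E y / c) / Z)
      ((-c⁻¹ * (Real.exp (-E x / c) / Z)) • gradient E x) x := by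
  have hg : HasDerivAt (fun t : ℝ => Real.exp (-t / c) / Z)
      (Real.exp (-E x / c) * (-1 / c) / Z) (E x) :=
    (((hasDerivAt_id _).neg.div_const _).exp).div_const Z
  rw [hasGradientAt_iff_hasFDerivAt]
  refine (hg.comp_hasFDerivAt x hE.hasGradientAt.hasFDerivAt).congr_fderiv ?_
  ext y
  simp only [toDual_gradient, smul_apply, smul_eq_mul, neg_mul, neg_smul, map_neg, map_smul,
    neg_apply]
  ring

theorem measurable_gradient [MeasurableSpace F] [BorelSpace F] (f : F → ℝ) :
    Measurable (gradient f) :=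
  (toDual ℝ F).symm.continuous.measurable.comp (measurable_fderiv ℝ f)

theorem HasGradientAt.log {f : F → ℝ} {f' x : F} (hf : HasGradientAt f f' x) (hx : f x ≠ 0) :
    HasGradientAt (fun y => Real.log (f y)) ((f x)⁻¹ • f') x := by
  rw [hasGradientAt_iff_hasFDerivAt, map_smul]
  exact hf.hasFDerivAt.log hx

end Gradient

theorem integral_integral_smul_sub_eq_neg_smul_gradient {α F : Type*} [MeasureSpace α]
    [NormedAddCommGroup F] [InnerProductSpace ℝ F] [CompleteSpace F] [MeasureSpace F]
    {τ : ℝ} (hτ : τ ≠ 0) {W : α → F → ℝ} {π : α → F → F → ℝ} {q : F → ℝ} {y : F}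
    (hπ : ∀ a b x, π a b x = W a b * Real.exp (-‖x - b‖ ^ 2 / (2 * τ ^ 2)))
    (hq : gradient q y = ∫ a, ∫ b, gradient (fun x => π a b x) y) :
    ∫ a, ∫ b, π a b y • (y - b) = -τ ^ 2 • gradient q y := by
  have hgrad (a : α) (b : F) :
      gradient (fun x => π a b x) y = (-(τ ^ 2)⁻¹ * π a b y) • (y - b) := by
    simp_rw [hπ]
    exact (hasGradientAt_mul_exp_neg_norm_sub_sq _ _ _ _).gradient
  simp_rw [hq, hgrad, mul_smul, integral_smul, smul_smul]
  rw [neg_mul_neg, mul_inv_cancel₀ (pow_ne_zero 2 hτ), one_smul]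

theorem integrable_integral_of_norm_le_mul {α β E : Type*} [MeasurableSpace α]
    [MeasurableSpace β] {μ : Measure α} {ν : Measure β} [SFinite ν] [NormedAddCommGroup E]
    [NormedSpace ℝ E] {g : α → β → E} {p : α → ℝ} {k : α → β → ℝ}
    (hg : StronglyMeasurable (Function.uncurry g)) (hp : Integrable p μ)
    (hk : ∀ a, Integrable (k a) ν) (hk_one : ∀ a, ∫ b, k a b ∂ν = 1)
    (hle : ∀ a b, ‖g a b‖ ≤ p a * k a b) :
    (∀ a, Integrable (g a) ν) ∧ Integrable (fun a => ∫ b, g a b ∂ν) μ := by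
  have hsec (a : α) : Integrable (g a) ν :=
    ((hk a).const_mul (p a)).mono' (hg.comp_measurable measurable_prodMk_left).aestronglyMeasurable
      (ae_of_all _ (hle a))
  refine ⟨hsec, hp.mono' hg.integral_prod_right'.aestronglyMeasurable (ae_of_all _ fun a => ?_)⟩
  calc ‖∫ b, g a b ∂ν‖ ≤ ∫ b, ‖g a b‖ ∂ν := norm_integral_le_integral_norm _
    _ ≤ ∫ b, p a * k a b ∂ν := integral_mono (hsec a).norm ((hk a).const_mul _) (hle a)
    _ = p a := by rw [integral_const_mul, hk_one, mul_one]

theorem ofReal_integral_integral_eq_lintegral_lintegral {α β : Type*} [MeasurableSpace α]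
    [MeasurableSpace β] {μ : Measure α} {ν : Measure β} {g : α → β → ℝ}
    (hg : ∀ a b, 0 ≤ g a b) (hsec : ∀ a, Integrable (g a) ν)
    (hint : Integrable (fun a => ∫ b, g a b ∂ν) μ) :
    ENNReal.ofReal (∫ a, ∫ b, g a b ∂ν ∂μ) = ∫⁻ a, ∫⁻ b, ENNReal.ofReal (g a b) ∂ν ∂μ := by
  rw [ofReal_integral_eq_lintegral_ofReal hint (ae_of_all _ fun a => integral_nonneg (hg a))]
  exact lintegral_congr fun a => ofReal_integral_eq_lintegral_ofReal (hsec a) (ae_of_all _ (hg a))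

section InnerExpansion

variable {X E : Type*} [MeasurableSpace X] {μ : Measure X} [NormedAddCommGroup E]
  [InnerProductSpace ℝ E] {u v : X → E} {w : X → ℝ}

theorem integrable_inner_mul_of_norm_sq_mul (hu : AEStronglyMeasurable u μ)
    (hv : AEStronglyMeasurable v μ) (hw : AEStronglyMeasurable w μ) (hw0 : ∀ x, 0 ≤ w x)
    (hu2 : Integrable (fun x => ‖u x‖ ^ 2 * w x) μ)
    (hv2 : Integrable (fun x => ‖v x‖ ^ 2 * w x) μ) :
    Integrable (fun x => ⟪u x, v x⟫_ℝ * w x) μ := by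
  refine (hu2.add hv2).mono' ((hu.inner hv).mul hw) (ae_of_all _ fun x => ?_)
  have hcs : |⟪u x, v x⟫_ℝ| ≤ ‖u x‖ * ‖v x‖ := abs_real_inner_le_norm _ _
  rw [Pi.add_apply, norm_mul, Real.norm_eq_abs, Real.norm_of_nonneg (hw0 x), ← add_mul]
  exact mul_le_mul_of_nonneg_right
    (by nlinarith [sq_nonneg (‖u x‖ - ‖v x‖), norm_nonneg (u x), norm_nonneg (v x)]) (hw0 x)

theorem integral_norm_smul_sub_sq_mul (a : ℝ) (hu : AEStronglyMeasurable u μ)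
    (hv : AEStronglyMeasurable v μ) (hw : AEStronglyMeasurable w μ) (hw0 : ∀ x, 0 ≤ w x)
    (hu2 : Integrable (fun x => ‖u x‖ ^ 2 * w x) μ)
    (hv2 : Integrable (fun x => ‖v x‖ ^ 2 * w x) μ) :
    ∫ x, ‖a • u x - v x‖ ^ 2 * w x ∂μ = a ^ 2 * ∫ x, ‖u x‖ ^ 2 * w x ∂μ
      - 2 * a * ∫ x, ⟪u x, v x⟫_ℝ * w x ∂μ + ∫ x, ‖v x‖ ^ 2 * w x ∂μ := by
  have hu2' := hu2.const_mul (a ^ 2)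
  have huv := (integrable_inner_mul_of_norm_sq_mul hu hv hw hw0 hu2 hv2).const_mul (2 * a)
  have hexp (x : X) : ‖a • u x - v x‖ ^ 2 * w x
      = a ^ 2 * (‖u x‖ ^ 2 * w x) - 2 * a * (⟪u x, v x⟫_ℝ * w x) + ‖v x‖ ^ 2 * w x := by
    rw [norm_sub_sq_real, norm_smul, real_inner_smul_left, Real.norm_eq_abs, mul_pow, sq_abs]
    ring
  simp_rw [hexp]
  rw [integral_add (by exact hu2'.sub huv) hv2, integral_sub hu2' huv, integral_const_mul,
    integral_const_mul]

theorem integral_norm_sub_sq_mul (hu : AEStronglyMeasurable u μ)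
    (hv : AEStronglyMeasurable v μ) (hw : AEStronglyMeasurable w μ) (hw0 : ∀ x, 0 ≤ w x)
    (hu2 : Integrable (fun x => ‖u x‖ ^ 2 * w x) μ)
    (hv2 : Integrable (fun x => ‖v x‖ ^ 2 * w x) μ) :
    ∫ x, ‖u x - v x‖ ^ 2 * w x ∂μ = ∫ x, ‖u x‖ ^ 2 * w x ∂μ
      - 2 * ∫ x, ⟪u x, v x⟫_ℝ * w x ∂μ + ∫ x, ‖v x‖ ^ 2 * w x ∂μ := by
  simpa using integral_norm_smul_sub_sq_mul 1 hu hv hw hw0 hu2 hv2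

end InnerExpansion

theorem measurableEmbedding_rotate {α β γ : Type*} [MeasurableSpace α] [MeasurableSpace β]
    [MeasurableSpace γ] : MeasurableEmbedding fun w : γ × α × β => (w.2.1, w.2.2, w.1) :=
  (MeasurableEquiv.prodComm.trans MeasurableEquiv.prodAssoc).measurableEmbedding

section Rotate

variable {α β γ : Type*} [MeasureSpace α] [MeasureSpace β] [MeasureSpace γ]
  [SigmaFinite (volume : Measure α)] [SigmaFinite (volume : Measure β)]
  [SigmaFinite (volume : Measure γ)]

theorem volume_preserving_rotate :
    MeasurePreserving (fun w : γ × α × β => (w.2.1, w.2.2, w.1)) :=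
  volume_preserving_prodAssoc.comp Measure.measurePreserving_swap

theorem lintegral_eq_lintegral_lintegral_lintegral_rotate {G : α × β × γ → ENNReal}
    (hG : Measurable G) : ∫⁻ z, G z = ∫⁻ c, ∫⁻ a, ∫⁻ b, G (a, b, c) := by
  rw [← volume_preserving_rotate.lintegral_comp hG, Measure.volume_eq_prod,
    lintegral_prod (fun w : γ × α × β => G (w.2.1, w.2.2, w.1)) (by fun_prop)]
  refine lintegral_congr fun c => ?_
  exact lintegral_prod (fun p : α × β => G (p.1, p.2, c)) (by fun_prop)

theorem integral_eq_integral_integral_integral_rotate {E : Type*} [NormedAddCommGroup E]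
    [NormedSpace ℝ E] {F : α × β × γ → E} (hF : Integrable F) :
    ∫ z, F z = ∫ c, ∫ a, ∫ b, F (a, b, c) := by
  have hrot : Integrable (fun w : γ × α × β => F (w.2.1, w.2.2, w.1)) (volume.prod volume) :=
    (volume_preserving_rotate.integrable_comp_emb measurableEmbedding_rotate).mpr hF
  rw [← volume_preserving_rotate.integral_comp measurableEmbedding_rotate,
    Measure.volume_eq_prod, integral_prod _ hrot]
  refine integral_congr_ae ?_
  filter_upwards [hrot.prod_right_ae] with c hc
  rw [Measure.volume_eq_prod, integral_prod _ hc]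

theorem integrable_mul_marginal_and_integral_eq {π : α → β → γ → ℝ} {q w : γ → ℝ}
    (hπ : Measurable fun z : α × β × γ => π z.1 z.2.1 z.2.2) (hπ0 : ∀ a b c, 0 ≤ π a b c)
    (hq : ∀ c, ENNReal.ofReal (q c) = ∫⁻ a, ∫⁻ b, ENNReal.ofReal (π a b c))
    (hq0 : ∀ c, 0 ≤ q c) (hw : Measurable w) (hw0 : ∀ c, 0 ≤ w c)
    (hwq : Integrable fun c => w c * q c) :
    Integrable (fun z : α × β × γ => w z.2.2 * π z.1 z.2.1 z.2.2) ∧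
      ∫ z : α × β × γ, w z.2.2 * π z.1 z.2.1 z.2.2 = ∫ c, w c * q c := by
  have hm : Measurable fun z : α × β × γ => w z.2.2 * π z.1 z.2.1 z.2.2 := by fun_prop
  have hnn : 0 ≤ᵐ[volume] fun z : α × β × γ => w z.2.2 * π z.1 z.2.1 z.2.2 :=
    ae_of_all _ fun z => mul_nonneg (hw0 _) (hπ0 _ _ _)
  have hwq0 : 0 ≤ᵐ[volume] fun c => w c * q c := ae_of_all _ fun c => mul_nonneg (hw0 c) (hq0 c)
  have hlin : ∫⁻ z : α × β × γ, ENNReal.ofReal (w z.2.2 * π z.1 z.2.1 z.2.2)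
      = ∫⁻ c, ENNReal.ofReal (w c * q c) := by
    rw [lintegral_eq_lintegral_lintegral_lintegral_rotate hm.ennreal_ofReal]
    refine lintegral_congr fun c => ?_
    simp_rw [ENNReal.ofReal_mul (hw0 c), hq c, lintegral_const_mul' _ _ ENNReal.ofReal_ne_top]
  refine ⟨⟨hm.aestronglyMeasurable, ?_⟩, ?_⟩
  · rw [hasFiniteIntegral_iff_ofReal hnn, hlin]
    exact (hasFiniteIntegral_iff_ofReal hwq0).mp hwq.2
  · rw [integral_eq_lintegral_of_nonneg_ae hnn hm.aestronglyMeasurable, hlin,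
      integral_eq_lintegral_of_nonneg_ae hwq0 hwq.1]

theorem integral_inner_mul_eq_integral_inner_integral_integral {E : Type*}
    [NormedAddCommGroup E] [InnerProductSpace ℝ E] [CompleteSpace E]
    {π : α → β → γ → ℝ} {v : α → β → γ → E} {g : γ → E}
    (hint : Integrable fun z : α × β × γ => ⟪g z.2.2, v z.1 z.2.1 z.2.2⟫_ℝ * π z.1 z.2.1 z.2.2)
    (hsec : ∀ c a, Integrable fun b => π a b c • v a b c)
    (hsec' : ∀ c, Integrable fun a => ∫ b, π a b c • v a b c) :
    ∫ z : α × β × γ, ⟪g z.2.2, v z.1 z.2.1 z.2.2⟫_ℝ * π z.1 z.2.1 z.2.2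
      = ∫ c, ⟪g c, ∫ a, ∫ b, π a b c • v a b c⟫_ℝ := by
  rw [integral_eq_integral_integral_integral_rotate hint]
  refine integral_congr_ae (ae_of_all _ fun c => ?_)
  simp_rw [mul_comm _ (π _ _ c), ← real_inner_smul_right, integral_inner (hsec c _)]
  exact integral_inner (hsec' c) _

end Rotate

section Denoising

variable {α F : Type*} [MeasureSpace α] [SigmaFinite (volume : Measure α)]
  [NormedAddCommGroup F] [InnerProductSpace ℝ F] [CompleteSpace F] [MeasureSpace F]
  [BorelSpace F] [SecondCountableTopology F] [SigmaFinite (volume : Measure F)]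
  {π : α → F → F → ℝ} {q : F → ℝ}

theorem integral_denoising_loss_eq {f : F → F}
    (hπ : Measurable fun z : α × F × F => π z.1 z.2.1 z.2.2) (hπ0 : ∀ a b y, 0 ≤ π a b y)
    (hq : ∀ y, ENNReal.ofReal (q y) = ∫⁻ a, ∫⁻ b, ENNReal.ofReal (π a b y))
    (hq0 : ∀ y, 0 ≤ q y) (hsec : ∀ y a, Integrable fun b => π a b y • (y - b))
    (hsec' : ∀ y, Integrable fun a => ∫ b, π a b y • (y - b))
    (hf : Measurable f) (hf2 : Integrable fun y => ‖f y‖ ^ 2 * q y)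
    (hnoise : Integrable fun z : α × F × F => ‖z.2.2 - z.2.1‖ ^ 2 * π z.1 z.2.1 z.2.2) :
    ∫ z : α × F × F, ‖f z.2.2 - (z.2.2 - z.2.1)‖ ^ 2 * π z.1 z.2.1 z.2.2
      = (∫ y, ‖f y‖ ^ 2 * q y) - 2 * (∫ y, ⟪f y, ∫ a, ∫ b, π a b y • (y - b)⟫_ℝ)
        + ∫ z : α × F × F, ‖z.2.2 - z.2.1‖ ^ 2 * π z.1 z.2.1 z.2.2 := by
  obtain ⟨hf2', hf2_eq⟩ := integrable_mul_marginal_and_integral_eq (w := fun y => ‖f y‖ ^ 2)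
    hπ hπ0 hq hq0 (hf.norm.pow_const 2) (fun _ => by positivity) hf2
  have hf' : AEStronglyMeasurable (fun z : α × F × F => f z.2.2) :=
    (hf.comp measurable_snd.snd).aestronglyMeasurable
  have hnoise' : AEStronglyMeasurable (fun z : α × F × F => z.2.2 - z.2.1) :=
    (measurable_snd.snd.sub measurable_snd.fst).aestronglyMeasurable
  rw [integral_norm_sub_sq_mul hf' hnoise' hπ.aestronglyMeasurable (fun _ => hπ0 _ _ _) hf2'
    hnoise, hf2_eq, integral_inner_mul_eq_integral_inner_integral_integral (v := fun _ b y => y - b)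
    (integrable_inner_mul_of_norm_sq_mul hf' hnoise' hπ.aestronglyMeasurable
      (fun _ => hπ0 _ _ _) hf2' hnoise) hsec hsec']

theorem integral_gaussian_denoising_loss_eq {p : α → ℝ} {k : α → F → ℝ} {C τ : ℝ}
    {f : F → F} (hτ : 0 < τ) (hC : 0 ≤ C) (hpk : ∀ a b, 0 ≤ p a * k a b) (hp : Measurable p)
    (hk : Measurable (Function.uncurry k)) (hp_int : Integrable p)
    (hk_int : ∀ a, Integrable (k a)) (hk_one : ∀ a, ∫ b, k a b = 1)
    (hπ : ∀ a b y, π a b y = p a * k a b * C * Real.exp (-‖y - b‖ ^ 2 / (2 * τ ^ 2)))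
    (hq : ∀ y, q y = ∫ a, ∫ b, π a b y)
    (hf : Measurable f) (hf2 : Integrable fun y => ‖f y‖ ^ 2 * q y)
    (hnoise : Integrable fun z : α × F × F => ‖z.2.2 - z.2.1‖ ^ 2 * π z.1 z.2.1 z.2.2) :
    ∫ z : α × F × F, ‖f z.2.2 - (z.2.2 - z.2.1)‖ ^ 2 * π z.1 z.2.1 z.2.2
      = (∫ y, ‖f y‖ ^ 2 * q y) - 2 * (∫ y, ⟪f y, ∫ a, ∫ b, π a b y • (y - b)⟫_ℝ)
        + ∫ z : α × F × F, ‖z.2.2 - z.2.1‖ ^ 2 * π z.1 z.2.1 z.2.2 := by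
  have hπ0 (a b y) : 0 ≤ π a b y := by rw [hπ]; have := hpk a b; positivity
  have hπm : Measurable fun z : α × F × F => π z.1 z.2.1 z.2.2 := by
    simp_rw [hπ]
    exact (((hp.comp measurable_fst).mul
      (hk.comp (measurable_fst.prodMk measurable_snd.fst))).mul_const C).mul (by fun_prop)
  have hπ_sec (y : F) : Measurable (Function.uncurry fun a b => π a b y) :=
    hπm.comp (measurable_fst.prodMk (measurable_snd.prodMk measurable_const))
  have hsec (y : F) := integrable_integral_of_norm_le_mul (hπ_sec y).stronglyMeasurable
    (hp_int.const_mul C) hk_int hk_one fun a b => by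
      rw [Real.norm_of_nonneg (hπ0 a b y), hπ, mul_assoc C]
      exact mul_mul_exp_neg_sq_le (hpk a b) hC _
  have hsec_smul (y : F) := integrable_integral_of_norm_le_mul
    (g := fun a b => π a b y • (y - b))
    ((hπ_sec y).smul (measurable_const.sub measurable_snd)).stronglyMeasurable
    (hp_int.const_mul (C * τ)) hk_int hk_one fun a b => by
      rw [hπ, mul_assoc (C * τ)]
      exact norm_smul_mul_exp_neg_norm_sq_le hτ (hpk a b) hC _
  refine integral_denoising_loss_eq hπm hπ0 (fun y => ?_) (fun y => ?_)
    (fun y => (hsec_smul y).1) (fun y => (hsec_smul y).2) hf hf2 hnoise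
  · rw [hq]
    exact ofReal_integral_integral_eq_lintegral_lintegral (fun a b => hπ0 a b y) (hsec y).1
      (hsec y).2
  · rw [hq]
    exact integral_nonneg fun a => integral_nonneg fun b => hπ0 a b y

end Denoising

theorem frad_learns_forces_general (n : ℕ) (τ c : ℝ) (hτ : 0 < τ) (hc : 0 < c)
    (p_eq : EuclideanSpace ℝ (Fin n) → ℝ)
    (hpeq_meas : Measurable p_eq) (hpeq_nonneg : ∀ x, 0 ≤ p_eq x)
    (hpeq_prob : ∫ x : EuclideanSpace ℝ (Fin n), p_eq x = 1)
    (k : EuclideanSpace ℝ (Fin n) → EuclideanSpace ℝ (Fin n) → ℝ)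
    (hk_meas : Measurable (Function.uncurry k)) (hk_nonneg : ∀ x_eq x_m, 0 ≤ k x_eq x_m)
    (hk_prob : ∀ x_eq, ∫ x_m, k x_eq x_m = 1)
    (φτ : EuclideanSpace ℝ (Fin n) → ℝ)
    (hφτ : ∀ u, φτ u = (2 * Real.pi * τ ^ 2) ^ (-(n : ℝ) / 2) *
      Real.exp (-‖u‖ ^ 2 / (2 * τ ^ 2)))
    (pj : EuclideanSpace ℝ (Fin n) → EuclideanSpace ℝ (Fin n) →
      EuclideanSpace ℝ (Fin n) → ℝ)
    (hpj : ∀ x_eq x_m x_f, pj x_eq x_m x_f = p_eq x_eq * k x_eq x_m * φτ (x_f - x_m))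
    (q : EuclideanSpace ℝ (Fin n) → ℝ)
    (hq_def : ∀ x_f, q x_f = ∫ x_eq, ∫ x_m, pj x_eq x_m x_f)
    (hq_pos : ∀ x_f, 0 < q x_f)
    (En : EuclideanSpace ℝ (Fin n) → ℝ) (hEn : Differentiable ℝ En)
    (Z : ℝ)
    (hq_boltzmann : ∀ x_f, q x_f = Real.exp (-En x_f / c) / Z)
    (hq_grad : ∀ x_f, gradient q x_f =
      ∫ x_eq, ∫ x_m, gradient (fun y => pj x_eq x_m y) x_f)
    (hfin1 : Integrable (fun z : EuclideanSpace ℝ (Fin n) × EuclideanSpace ℝ (Fin n) ×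
        EuclideanSpace ℝ (Fin n) =>
      ‖(τ ^ 2)⁻¹ • (z.2.2 - z.2.1)‖ ^ 2 * pj z.1 z.2.1 z.2.2))
    (hfin2 : Integrable (fun x_f =>
      ‖gradient (fun y => Real.log (q y)) x_f‖ ^ 2 * q x_f)) :
    ∀ f : EuclideanSpace ℝ (Fin n) → EuclideanSpace ℝ (Fin n), Measurable f →
      Integrable (fun x_f => ‖f x_f‖ ^ 2 * q x_f) →
      (∫ z : EuclideanSpace ℝ (Fin n) × EuclideanSpace ℝ (Fin n) ×
          EuclideanSpace ℝ (Fin n),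
        ‖f z.2.2 - (z.2.2 - z.2.1)‖ ^ 2 * pj z.1 z.2.1 z.2.2) =
      (τ ^ 4 / c ^ 2) *
        (∫ x_f, ‖(-(c / τ ^ 2)) • f x_f - (-(gradient En x_f))‖ ^ 2 * q x_f) +
      τ ^ 4 * ((∫ z : EuclideanSpace ℝ (Fin n) × EuclideanSpace ℝ (Fin n) ×
          EuclideanSpace ℝ (Fin n),
        ‖(τ ^ 2)⁻¹ • (z.2.2 - z.2.1)‖ ^ 2 * pj z.1 z.2.1 z.2.2) -
        ∫ x_f, ‖gradient (fun y => Real.log (q y)) x_f‖ ^ 2 * q x_f) := by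
  intro f hf hf2
  have hpj_gauss (a b y) : pj a b y = p_eq a * k a b * (2 * Real.pi * τ ^ 2) ^ (-(n : ℝ) / 2)
      * Real.exp (-‖y - b‖ ^ 2 / (2 * τ ^ 2)) := by
    rw [hpj, hφτ]; ring
  have hgradq (y) : HasGradientAt q ((-c⁻¹ * q y) • gradient En y) y := by
    rw [funext hq_boltzmann]
    exact hasGradientAt_exp_neg_div_div (hEn y) c Z
  have hcross (y) : ⟪f y, ∫ a, ∫ b, pj a b y • (y - b)⟫_ℝ
      = τ ^ 2 / c * (⟪f y, gradient En y⟫_ℝ * q y) := by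
    rw [integral_integral_smul_sub_eq_neg_smul_gradient hτ.ne' hpj_gauss (hq_grad y),
      (hgradq y).gradient, smul_smul, real_inner_smul_right]
    ring
  have hlog_norm (y) :
      ‖gradient (fun y => Real.log (q y)) y‖ ^ 2 = (c ^ 2)⁻¹ * ‖gradient En y‖ ^ 2 := by
    rw [((hgradq y).log (hq_pos y).ne').gradient, smul_smul, mul_left_comm,
      inv_mul_cancel₀ (hq_pos y).ne', mul_one, norm_smul, mul_pow, norm_neg, norm_inv,
      Real.norm_of_nonneg hc.le, inv_pow]
  have hscale (v : EuclideanSpace ℝ (Fin n)) : ‖(τ ^ 2)⁻¹ • v‖ ^ 2 = (τ ^ 4)⁻¹ * ‖v‖ ^ 2 := by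
    rw [norm_smul, mul_pow, norm_inv, norm_pow, Real.norm_of_nonneg hτ.le]; ring
  have hforce_norm (y) :
      ‖(-(c / τ ^ 2)) • f y - -gradient En y‖ = ‖(c / τ ^ 2) • f y - gradient En y‖ := by
    rw [neg_smul, neg_sub_neg, norm_sub_rev]
  simp_rw [hscale, hlog_norm, hforce_norm, mul_assoc, integral_const_mul] at hfin1 hfin2 ⊢
  have hnoise := (integrable_const_mul_iff (by positivity : (τ ^ 4)⁻¹ ≠ 0).isUnit _).mp hfin1
  have hforce := (integrable_const_mul_iff (by positivity : (c ^ 2)⁻¹ ≠ 0).isUnit _).mp hfin2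
  have hq_meas : Measurable q :=
    (continuous_iff_continuousAt.2 fun y => (hgradq y).continuousAt).measurable
  rw [integral_gaussian_denoising_loss_eq hτ (by positivity)
      (fun a b => mul_nonneg (hpeq_nonneg a) (hk_nonneg a b)) hpeq_meas hk_meas
      (.of_integral_ne_zero (by simp [hpeq_prob]))
      (fun a => .of_integral_ne_zero (by simp [hk_prob]))
      hk_prob hpj_gauss hq_def hf hf2 hnoise,
    integral_norm_smul_sub_sq_mul _ hf.aestronglyMeasurable
      (measurable_gradient En).aestronglyMeasurable hq_meas.aestronglyMeasurable
      (fun y => (hq_pos y).le) hf2 hforce]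
  simp_rw [hcross, integral_const_mul]
  field_simp
  ring

/-- **Theorem 1: Learning forces via fractional denoising.**
With equilibrium density `p_eq`, chemical-aware conditional noise density `k`, and
coordinate Gaussian noise `φ_τ`, form the joint density
`π(x_eq, x_m, x_f) = p_eq(x_eq) k(x_m|x_eq) φ_τ(x_f − x_m)` and its marginal
`q(x_f) = ∫∫ π dx_eq dx_m`.  If `q` is everywhere positive and of Boltzmann form
`q = exp(−E/c)/Z` with `E` differentiable and `Z ∈ (0, ∞)`, the gradient/integral
interchange holds, and `∫∫∫ ‖(x_f−x_m)/τ²‖² dπ` and `∫ ‖∇ log q‖² q` are finite, then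
for every measurable `f` with `∫ ‖f‖² q < ∞`,
`∫ ‖f(x_f) − (x_f − x_m)‖² dπ
  = (τ⁴/c²) ∫ ‖(−c/τ²) f(x_f) − (−∇E(x_f))‖² q(x_f) dx_f + C` with
`C = τ⁴ (∫ ‖(x_f−x_m)/τ²‖² dπ − ∫ ‖∇ log q‖² q)` independent of `f`. -/
theorem frad_learns_forces (n : ℕ) (hn : 0 < n) (τ c : ℝ) (hτ : 0 < τ) (hc : 0 < c)
    (p_eq : EuclideanSpace ℝ (Fin n) → ℝ)
    (hpeq_meas : Measurable p_eq) (hpeq_nonneg : ∀ x, 0 ≤ p_eq x)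
    (hpeq_prob : ∫ x : EuclideanSpace ℝ (Fin n), p_eq x = 1)
    (k : EuclideanSpace ℝ (Fin n) → EuclideanSpace ℝ (Fin n) → ℝ)
    (hk_meas : Measurable (Function.uncurry k)) (hk_nonneg : ∀ x_eq x_m, 0 ≤ k x_eq x_m)
    (hk_prob : ∀ x_eq, ∫ x_m, k x_eq x_m = 1)
    (φτ : EuclideanSpace ℝ (Fin n) → ℝ)
    (hφτ : ∀ u, φτ u = (2 * Real.pi * τ ^ 2) ^ (-(n : ℝ) / 2) *
      Real.exp (-‖u‖ ^ 2 / (2 * τ ^ 2)))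
    (pj : EuclideanSpace ℝ (Fin n) → EuclideanSpace ℝ (Fin n) →
      EuclideanSpace ℝ (Fin n) → ℝ)
    (hpj : ∀ x_eq x_m x_f, pj x_eq x_m x_f = p_eq x_eq * k x_eq x_m * φτ (x_f - x_m))
    (q : EuclideanSpace ℝ (Fin n) → ℝ)
    (hq_def : ∀ x_f, q x_f = ∫ x_eq, ∫ x_m, pj x_eq x_m x_f)
    (hq_pos : ∀ x_f, 0 < q x_f)
    (En : EuclideanSpace ℝ (Fin n) → ℝ) (hEn : Differentiable ℝ En)
    (Z : ℝ) (hZ : 0 < Z)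
    (hq_boltzmann : ∀ x_f, q x_f = Real.exp (-En x_f / c) / Z)
    (hq_grad : ∀ x_f, gradient q x_f =
      ∫ x_eq, ∫ x_m, gradient (fun y => pj x_eq x_m y) x_f)
    (hfin1 : Integrable (fun z : EuclideanSpace ℝ (Fin n) × EuclideanSpace ℝ (Fin n) ×
        EuclideanSpace ℝ (Fin n) =>
      ‖(τ ^ 2)⁻¹ • (z.2.2 - z.2.1)‖ ^ 2 * pj z.1 z.2.1 z.2.2))
    (hfin2 : Integrable (fun x_f =>
      ‖gradient (fun y => Real.log (q y)) x_f‖ ^ 2 * q x_f)) :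
    ∀ f : EuclideanSpace ℝ (Fin n) → EuclideanSpace ℝ (Fin n), Measurable f →
      Integrable (fun x_f => ‖f x_f‖ ^ 2 * q x_f) →
      (∫ z : EuclideanSpace ℝ (Fin n) × EuclideanSpace ℝ (Fin n) ×
          EuclideanSpace ℝ (Fin n),
        ‖f z.2.2 - (z.2.2 - z.2.1)‖ ^ 2 * pj z.1 z.2.1 z.2.2) =
      (τ ^ 4 / c ^ 2) *
        (∫ x_f, ‖(-(c / τ ^ 2)) • f x_f - (-(gradient En x_f))‖ ^ 2 * q x_f) +
      τ ^ 4 * ((∫ z : EuclideanSpace ℝ (Fin n) × EuclideanSpace ℝ (Fin n) ×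
          EuclideanSpace ℝ (Fin n),
        ‖(τ ^ 2)⁻¹ • (z.2.2 - z.2.1)‖ ^ 2 * pj z.1 z.2.1 z.2.2) -
        ∫ x_f, ‖gradient (fun y => Real.log (q y)) x_f‖ ^ 2 * q x_f) :=
  frad_learns_forces_general n τ c hτ hc p_eq hpeq_meas hpeq_nonneg hpeq_prob k hk_meas hk_nonneg
    hk_prob φτ hφτ pj hpj q hq_def hq_pos En hEn Z hq_boltzmann hq_grad hfin1 hfin2
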